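/- Let K be a field of characteristic 0 and let t, d ∈ K. The Weierstrass curve C_{25,3}(t,d) has invariants c₄ = 2⁴·3⁴·5⁸·d²·S₂(t)·S₇(t), c₆ = 2⁶·3⁶·5¹²·d³·S₂(t)²·S₈(t)·S₉(t), and discriminant Δ = 2¹²·3¹²·5²⁴·d⁶·S₁(t)·S₂(t)³·S₃(t); moreover, if Δ ≠ 0 then its j-invariant equals S₇(t)³ / (S₁(t)·S₃(t)). -/

import Mathlib

noncomputable section

/-- The polynomial `S1`. -/
def S1 {K : Type*} [Field K] (t : K) : K := t ^ 4 + t ^ 3 + 6 * t ^ 2 + 6 * t + 11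

/-- The polynomial `S2`. -/
def S2 {K : Type*} [Field K] (t : K) : K := t ^ 2 + 4

/-- The polynomial `S3`. -/
def S3 {K : Type*} [Field K] (t : K) : K := t - 1

/-- The polynomial `S7`. -/
def S7 {K : Type*} [Field K] (t : K) : K := t ^ 10 + 10 * t ^ 8 + 35 * t ^ 6 - 12 * t ^ 5 + 50 * t ^ 4 - 60 * t ^ 3 + 25 * t ^ 2 - 60 * t + 16

/-- The polynomial `S8`. -/
def S8 {K : Type*} [Field K] (t : K) : K := t ^ 4 + 3 * t ^ 2 + 1

/-- The polynomial `S9`. -/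
def S9 {K : Type*} [Field K] (t : K) : K := t ^ 10 + 10 * t ^ 8 + 35 * t ^ 6 - 18 * t ^ 5 + 50 * t ^ 4 - 90 * t ^ 3 + 25 * t ^ 2 - 90 * t + 76

/-- The curve `C_{25,3}(t,d)`. -/
def C253 {K : Type*} [Field K] (t d : K) : WeierstrassCurve K :=
  { a₁ := 0, a₂ := 0, a₃ := 0,
    a₄ := -10546875 * d ^ 2 * S2 t * S7 t,
    a₆ := -13183593750 * d ^ 3 * S2 t ^ 2 * S8 t * S9 t }

theorem WeierstrassCurve.c₄_pow_three_div_Δ_eq {F : Type*} [Field F] (W : WeierstrassCurve F)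
    {c a b : F} (hc₄ : W.c₄ = c * a) (hΔ : W.Δ = c ^ 3 * b) (h : W.Δ ≠ 0) :
    W.c₄ ^ 3 / W.Δ = a ^ 3 / b := by
  rw [hΔ] at h ⊢
  rw [hc₄, mul_pow]
  exact mul_div_mul_left _ _ (left_ne_zero_of_mul h)

section C253

variable {K : Type*} [Field K] (t d : K)

instance isShortNF_C253 : (C253 t d).IsShortNF := ⟨rfl, rfl, rfl⟩

theorem c₄_C253 : (C253 t d).c₄ = 2 ^ 4 * 3 ^ 4 * 5 ^ 8 * d ^ 2 * S2 t * S7 t := by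
  rw [WeierstrassCurve.c₄_of_isShortNF]
  simp only [C253]
  ring

theorem c₆_C253 : (C253 t d).c₆ = 2 ^ 6 * 3 ^ 6 * 5 ^ 12 * d ^ 3 * S2 t ^ 2 * S8 t * S9 t := by
  rw [WeierstrassCurve.c₆_of_isShortNF]
  simp only [C253]
  ring

theorem Δ_C253 :
    (C253 t d).Δ = 2 ^ 12 * 3 ^ 12 * 5 ^ 24 * d ^ 6 * S1 t * S2 t ^ 3 * S3 t := by
  rw [WeierstrassCurve.Δ_of_isShortNF]
  simp only [C253, S1, S2, S3, S7, S8, S9]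
  ring

end C253

theorem stmt3_general {K : Type*} [Field K] (t d : K) :
    (C253 t d).c₄ = 2 ^ 4 * 3 ^ 4 * 5 ^ 8 * d ^ 2 * S2 t * S7 t ∧
    (C253 t d).c₆ = 2 ^ 6 * 3 ^ 6 * 5 ^ 12 * d ^ 3 * S2 t ^ 2 * S8 t * S9 t ∧
    (C253 t d).Δ = 2 ^ 12 * 3 ^ 12 * 5 ^ 24 * d ^ 6 * S1 t * S2 t ^ 3 * S3 t ∧
    ((C253 t d).Δ ≠ 0 → (C253 t d).c₄ ^ 3 / (C253 t d).Δ =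
      S7 t ^ 3 / (S1 t * S3 t)) := by
  refine ⟨c₄_C253 t d, c₆_C253 t d, Δ_C253 t d, ?_⟩
  -- `c₄` and `Δ` share the factor `2⁴·3⁴·5⁸·d²·S₂(t)`, to the first and third power.
  refine (C253 t d).c₄_pow_three_div_Δ_eq (c₄_C253 t d) ?_
  rw [Δ_C253]
  ring

theorem stmt3 {K : Type*} [Field K] [CharZero K] (t d : K) :
    (C253 t d).c₄ = 2 ^ 4 * 3 ^ 4 * 5 ^ 8 * d ^ 2 * S2 t * S7 t ∧
    (C253 t d).c₆ = 2 ^ 6 * 3 ^ 6 * 5 ^ 12 * d ^ 3 * S2 t ^ 2 * S8 t * S9 t ∧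
    (C253 t d).Δ = 2 ^ 12 * 3 ^ 12 * 5 ^ 24 * d ^ 6 * S1 t * S2 t ^ 3 * S3 t ∧
    ((C253 t d).Δ ≠ 0 → (C253 t d).c₄ ^ 3 / (C253 t d).Δ =
      S7 t ^ 3 / (S1 t * S3 t)) :=
  stmt3_general t d
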